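/- Let a ≥ 2 and m ≥ 0 be integers and let N be a subgroup of the unit group (ℤ/2^aℤ)^× containing the residue class of −5^m. Let U = (ℤ/2^aℤ) ⋊ N, with N acting by multiplication. Then the commutator subgroup U′ of U equals the subgroup 2·(ℤ/2^aℤ) of the normal factor, and the index |U : U′| equals 2·|N|. -/

import Mathlib

/-!
Reduction mod 2 on the normal factor together with the projection onto `N` is a surjective
homomorphism `U → ℤ/2 × N` whose kernel is `2·(ℤ/2^aℤ)`; its target is abelian, so `U′` lies in
the kernel. Conversely `⁅n, t⁆ = (n - 1) t` for `n ∈ N`, and for `n = -5^m` we have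
`n - 1 = 2·(unit)` because `5^m ≡ 1 (mod 4)`, so `2` is a commutator and the kernel is `U′`.
-/

/-- The action of the unit group of `ZMod q` on `Multiplicative (ZMod q)` by
multiplication, as a homomorphism into the automorphism group. -/
def zmodMulAut (q : ℕ) : (ZMod q)ˣ →* MulAut (Multiplicative (ZMod q)) where
  toFun u := AddEquiv.toMultiplicative (DistribMulAction.toAddAut (ZMod q)ˣ (ZMod q) u)
  map_one' := by ext x; simp
  map_mul' u v := by ext x; simp [SemigroupAction.mul_smul]

namespace SemidirectProduct

variable {K G A : Type*} [Group K] [Group G] [Group A] {φ : G →* MulAut K}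

open scoped commutatorElement in
theorem commutatorElement_inr_inl (g : G) (k : K) :
    ⁅(inr g : K ⋊[φ] G), (inl k : K ⋊[φ] G)⁆ = inl (φ g k * k⁻¹) := by
  simp [commutatorElement_def, inl_aut, mul_assoc]

def liftProd (f : K →* A) (hf : ∀ g k, f (φ g k) = f k) : K ⋊[φ] G →* A × G :=
  lift ((MonoidHom.inl A G).comp f) (MonoidHom.inr A G) fun g => by ext k <;> simp [hf]

variable (f : K →* A) (hf : ∀ g k, f (φ g k) = f k)

theorem liftProd_apply (x : K ⋊[φ] G) : liftProd f hf x = (f x.left, x.right) := by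
  conv_lhs => rw [← inl_left_mul_inr_right x]
  rw [liftProd, map_mul, lift_inl, lift_inr]
  simp

theorem ker_liftProd : (liftProd f hf).ker = f.ker.map inl := by
  ext x
  simp only [MonoidHom.mem_ker, liftProd_apply, Prod.mk_eq_one, Subgroup.mem_map]
  constructor
  · rintro ⟨hl, hr⟩
    exact ⟨x.left, hl, SemidirectProduct.ext rfl hr.symm⟩
  · rintro ⟨k, hk, rfl⟩
    exact ⟨hk, rfl⟩

theorem liftProd_surjective (hsurj : Function.Surjective f) :
    Function.Surjective (liftProd f hf) := by
  rintro ⟨b, g⟩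
  obtain ⟨k, rfl⟩ := hsurj b
  exact ⟨⟨k, g⟩, liftProd_apply f hf _⟩

end SemidirectProduct

namespace ZMod

theorem ker_castHom_toAddMonoidHom {m n : ℕ} (h : m ∣ n) :
    (castHom h (ZMod m)).toAddMonoidHom.ker = AddSubgroup.zmultiples (m : ZMod n) := by
  ext x
  obtain ⟨k, rfl⟩ := intCast_surjective x
  rw [AddMonoidHom.mem_ker, AddSubgroup.mem_zmultiples_iff]
  constructor
  · intro hk
    obtain ⟨j, rfl⟩ := (intCast_zmod_eq_zero_iff_dvd k m).mp (by simpa using hk)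
    exact ⟨j, by push_cast; ring⟩
  · rintro ⟨j, hj⟩
    rw [← hj, map_zsmul]
    simp

theorem castHom_two_units_mul {n : ℕ} (h : 2 ∣ n) (u : (ZMod n)ˣ) (x : ZMod n) :
    castHom h (ZMod 2) (u * x) = castHom h (ZMod 2) x := by
  have hunit : ∀ y : ZMod 2, y ≠ 0 → y = 1 := by decide
  rw [map_mul, hunit _ (u.isUnit.map (castHom h (ZMod 2))).ne_zero, one_mul]

theorem exists_neg_five_pow_sub_one_eq_two_mul (a m : ℕ) :
    ∃ v : (ZMod (2 ^ a))ˣ, -(5 : ZMod (2 ^ a)) ^ m - 1 = 2 * v := by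
  have h5 : 5 ^ m % 4 = 1 := by simp [Nat.pow_mod]
  have hodd : Odd ((5 ^ m + 1) / 2) := by
    rw [Nat.odd_iff]; omega
  refine ⟨-unitOfCoprime _ (Nat.Coprime.pow_right a (Nat.coprime_two_right.mpr hodd)), ?_⟩
  have hk : 2 * ((5 ^ m + 1) / 2) = 5 ^ m + 1 := by omega
  have := congrArg (Nat.cast : ℕ → ZMod (2 ^ a)) hk
  push_cast at this
  simp only [Units.val_neg, coe_unitOfCoprime, mul_neg]
  linear_combination this

end ZMod

theorem AddSubgroup.toSubgroup_zmultiples {A : Type*} [AddGroup A] (x : A) :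
    AddSubgroup.toSubgroup (AddSubgroup.zmultiples x) = Subgroup.zpowers (Multiplicative.ofAdd x) :=
  rfl

theorem inl_sub_one_mul_mem_commutator {q : ℕ} (N : Subgroup (ZMod q)ˣ) (n : N) (t : ZMod q) :
    (SemidirectProduct.inl (Multiplicative.ofAdd (((n : (ZMod q)ˣ) - 1 : ZMod q) * t)) :
      Multiplicative (ZMod q) ⋊[(zmodMulAut q).comp N.subtype] N) ∈ commutator _ := by
  have h : Multiplicative.ofAdd (((n : (ZMod q)ˣ) - 1 : ZMod q) * t) =
      (zmodMulAut q).comp N.subtype n (.ofAdd t) * (.ofAdd t)⁻¹ := by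
    rw [sub_one_mul, sub_eq_add_neg, ofAdd_add, ofAdd_neg]
    rfl
  rw [h, ← SemidirectProduct.commutatorElement_inr_inl]
  exact Subgroup.commutator_mem_commutator (Subgroup.mem_top _) (Subgroup.mem_top _)

/-- If `N ≤ (ℤ/2^aℤ)^×` contains the class of `-5^m` and `U = (ℤ/2^aℤ) ⋊ N`, then
`U′ = 2·(ℤ/2^aℤ)` and `|U : U′| = 2·|N|`. -/
theorem commutator_semidirect_neg_five_pow (a : ℕ) (ha : 2 ≤ a) (m : ℕ)
    (N : Subgroup (ZMod (2 ^ a))ˣ)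
    (hN : ∃ u ∈ N, ((u : (ZMod (2 ^ a))ˣ) : ZMod (2 ^ a)) = -(5 ^ m)) :
    commutator (Multiplicative (ZMod (2 ^ a)) ⋊[(zmodMulAut (2 ^ a)).comp N.subtype] N) =
      Subgroup.map SemidirectProduct.inl
        (AddSubgroup.toSubgroup (AddSubgroup.zmultiples ((2 : ZMod (2 ^ a))))) ∧
    (commutator (Multiplicative (ZMod (2 ^ a)) ⋊[(zmodMulAut (2 ^ a)).comp N.subtype] N)).index =
      2 * Nat.card N := by
  obtain ⟨u, huN, hu⟩ := hN
  have h2 : 2 ∣ 2 ^ a := dvd_pow_self 2 (by omega)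
  let F := SemidirectProduct.liftProd (φ := (zmodMulAut (2 ^ a)).comp N.subtype)
    (AddMonoidHom.toMultiplicative (ZMod.castHom h2 (ZMod 2)).toAddMonoidHom)
    fun g k => congrArg Multiplicative.ofAdd (ZMod.castHom_two_units_mul h2 g k.toAdd)
  have hker : F.ker = Subgroup.map SemidirectProduct.inl
      (AddSubgroup.toSubgroup (AddSubgroup.zmultiples 2)) := by
    refine (SemidirectProduct.ker_liftProd _ _).trans ?_
    rw [MonoidHom.coe_toMultiplicative_ker,
      ZMod.ker_castHom_toAddMonoidHom, Nat.cast_ofNat]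
  have hgen : SemidirectProduct.inl (Multiplicative.ofAdd 2) ∈ commutator
      (Multiplicative (ZMod (2 ^ a)) ⋊[(zmodMulAut (2 ^ a)).comp N.subtype] N) := by
    obtain ⟨v, hv⟩ := ZMod.exists_neg_five_pow_sub_one_eq_two_mul a m
    have h := inl_sub_one_mul_mem_commutator N ⟨u, huN⟩ ↑v⁻¹
    rwa [show ((u : ZMod (2 ^ a)) - 1) * ↑v⁻¹ = 2 by
      rw [hu, hv, mul_assoc, Units.mul_inv, mul_one]] at h
  have hcomm : commutator _ = F.ker := by
    refine le_antisymm (Abelianization.commutator_subset_ker F) ?_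
    rw [hker, AddSubgroup.toSubgroup_zmultiples, MonoidHom.map_zpowers, Subgroup.zpowers_le]
    exact hgen
  refine ⟨hcomm.trans hker, ?_⟩
  have hF : Function.Surjective F :=
    SemidirectProduct.liftProd_surjective _ _ (ZMod.ringHom_surjective (ZMod.castHom h2 (ZMod 2)))
  rw [hcomm, Subgroup.index_ker, MonoidHom.range_eq_top.mpr hF, Subgroup.card_top, Nat.card_prod]
  simp
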